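/- arXiv:2210.02067 — 2 statements merged into one kernel-verified Lean document; each statement's English description precedes it below -/
import Mathlib

section
/- Let P be a string with P ≈rc reverse(P) where ≈rc is complementary matching via an involution f. If a substring P[i..j] satisfies P[i..j] ≈rc reverse(P[i..j]), then P[|P|-j+1..|P|-i+1] ≈rc reverse(P[|P|-j+1..|P|-i+1]). -/
/-- `sub S i j` is the substring `S[i..j]` (1-indexed, inclusive). -/
def sub {α : Type*} (S : List α) (i j : ℕ) : List α :=
  (S.drop (i - 1)).take (j - i + 1)

/-! Since `P = f (reverse P)`, the mirror image `P[|P|-j+1..|P|-i+1]` of `Q = P[i..j]` equals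
`f (reverse Q)`, which is `Q` itself by hypothesis; so the mirror image is the same
Theta rev-palindrome `Q`. -/

theorem sub_map {α β : Type*} (f : α → β) (S : List α) (i j : ℕ) :
    sub (S.map f) i j = (sub S i j).map f := by
  simp only [sub, List.map_take, List.map_drop]

theorem sub_eq_drop_take {α : Type*} (S : List α) {i j : ℕ} (h1 : 1 ≤ i) (hij : i ≤ j) :
    sub S i j = (S.take j).drop (i - 1) := by
  rw [sub, List.drop_take]
  congr 2
  omega

theorem sub_reverse {α : Type*} (S : List α) {i j : ℕ} (h1 : 1 ≤ i) (hij : i ≤ j)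
    (hj : j ≤ S.length) :
    sub S.reverse (S.length - j + 1) (S.length - i + 1) = (sub S i j).reverse := by
  have hlen : (S.take j).length = j := List.length_take_of_le hj
  rw [sub, Nat.add_sub_cancel, List.drop_reverse, Nat.sub_sub_self hj, List.take_reverse, hlen,
    sub_eq_drop_take S h1 hij]
  congr 2
  omega

theorem stmt12_general {α : Type*} (f : α → α)
    (P : List α) (hP : P = P.reverse.map f)
    (i j : ℕ) (h1 : 1 ≤ i) (hij : i ≤ j) (hj : j ≤ P.length)
    (hpal : sub P i j = (sub P i j).reverse.map f) :
    sub P (P.length - j + 1) (P.length - i + 1) =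
      (sub P (P.length - j + 1) (P.length - i + 1)).reverse.map f := by
  have mirror : sub P (P.length - j + 1) (P.length - i + 1) = sub P i j := by
    conv_lhs => rw [hP]
    rw [sub_map, List.length_map, List.length_reverse, sub_reverse P h1 hij hj, ← hpal]
  rw [mirror]
  exact hpal

theorem stmt12 {α : Type*} (f : α → α) (hf : ∀ a, f (f a) = a)
    (P : List α) (hP : P = P.reverse.map f)
    (i j : ℕ) (h1 : 1 ≤ i) (hij : i ≤ j) (hj : j ≤ P.length)
    (hpal : sub P i j = (sub P i j).reverse.map f) :
    sub P (P.length - j + 1) (P.length - i + 1) =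
      (sub P (P.length - j + 1) (P.length - i + 1)).reverse.map f :=
  stmt12_general f P hP i j h1 hij hj hpal
end

section
/- Given the parent-distance encoding PD_T of a string T over a linearly ordered alphabet, the parent-distance encoding of any substring satisfies: PD_{T[i..j]}[k] = PD_T[i+k−1] if PD_T[i+k−1] < k, and 0 otherwise, for all 1 ≤ k ≤ j−i+1. -/
/-- parent-distance value at (0-indexed) position `p`. -/
def pdAt {α : Type*} [LinearOrder α] [Inhabited α] (T : List α) (p : ℕ) : ℕ :=
  match ((List.range p).filter (fun q => T.getD q default ≤ T.getD p default)).max? with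
  | some q => p - q
  | none => 0

/-- the parent-distance encoding `PD_T` of `T`. -/
def pd {α : Type*} [LinearOrder α] [Inhabited α] (T : List α) : List ℕ :=
  (List.range T.length).map (pdAt T)

/-! Parent distances are local: the value at `p` only looks at positions `q ≤ p`, and the
parent of `s + p` in `T` survives in `T.drop s` exactly when it lies at or after `s`, i.e. when
its distance is at most `p`. -/

namespace List

theorem getD_drop {α : Type*} (l : List α) (s q : ℕ) (d : α) :
    (l.drop s).getD q d = l.getD (s + q) d := by
  simp only [getD_eq_getElem?_getD, getElem?_drop]

theorem getD_take_of_lt {α : Type*} {l : List α} {n q : ℕ} (d : α) (h : q < n) :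
    (l.take n).getD q d = l.getD q d := by
  simp only [getD_eq_getElem?_getD, getElem?_take_of_lt h]

end List

theorem length_sub {α : Type*} (T : List α) {i j : ℕ} (hi : 1 ≤ i) (hij : i ≤ j)
    (hj : j ≤ T.length) :
    (sub T i j).length = j - i + 1 := by
  simp only [sub, List.length_take, List.length_drop]
  omega

section ParentDistance

variable {α : Type*} [LinearOrder α] [Inhabited α]

theorem pdAt_eq_iff (T : List α) (p d : ℕ) :
    pdAt T p = d ↔
      (d = 0 ∧ ∀ q < p, T.getD p default < T.getD q default) ∨
      (0 < d ∧ d ≤ p ∧ T.getD (p - d) default ≤ T.getD p default ∧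
        ∀ q, p - d < q → q < p → T.getD p default < T.getD q default) := by
  have hmem : ∀ q, q ∈ (List.range p).filter (fun q => T.getD q default ≤ T.getD p default) ↔
      q < p ∧ T.getD q default ≤ T.getD p default := by
    simp
  unfold pdAt
  split
  case h_1 m hm =>
    obtain ⟨hm_mem, hmax⟩ := List.max?_eq_some_iff.mp hm
    obtain ⟨hmp, hm_le⟩ := (hmem m).mp hm_mem
    simp only [hmem] at hmax
    constructor
    · rintro rfl
      refine .inr ⟨by omega, by omega, by rwa [Nat.sub_sub_self hmp.le], fun q hq hqp => ?_⟩
      by_contra! hle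
      have := hmax q ⟨hqp, hle⟩
      omega
    · rintro (⟨-, hlt⟩ | ⟨hd, hdp, hle, hlt⟩)
      · exact absurd hm_le (not_le.mpr (hlt m hmp))
      · have hparent := hmax (p - d) ⟨by omega, hle⟩
        rcases hparent.lt_or_eq with hlt' | heq
        · exact absurd hm_le (not_le.mpr (hlt m hlt' hmp))
        · omega
  case h_2 hnone =>
    have hempty := List.max?_eq_none_iff.mp hnone
    have hlt : ∀ q < p, T.getD p default < T.getD q default := fun q hq => by
      by_contra! hle
      exact List.not_mem_nil (hempty ▸ (hmem q).mpr ⟨hq, hle⟩)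
    constructor
    · rintro rfl
      exact .inl ⟨rfl, hlt⟩
    · rintro (⟨rfl, -⟩ | ⟨hd, hdp, hle, -⟩)
      · rfl
      · exact absurd hle (not_le.mpr (hlt (p - d) (by omega)))

theorem pdAt_take (T : List α) {n p : ℕ} (hp : p < n) : pdAt (T.take n) p = pdAt T p := by
  unfold pdAt
  rw [List.filter_congr fun q hq => by
    rw [List.getD_take_of_lt _ hp, List.getD_take_of_lt _ ((List.mem_range.mp hq).trans hp)]]

theorem pdAt_drop (T : List α) (s p : ℕ) :
    pdAt (T.drop s) p = if pdAt T (s + p) ≤ p then pdAt T (s + p) else 0 := by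
  obtain (⟨he, hlt⟩ | ⟨he, hep, hle, hlt⟩) := (pdAt_eq_iff T (s + p) _).mp rfl
  · rw [he, if_pos (Nat.zero_le _), pdAt_eq_iff]
    refine .inl ⟨rfl, fun q hq => ?_⟩
    simpa only [List.getD_drop] using hlt (s + q) (by omega)
  · rw [pdAt_eq_iff]
    simp only [List.getD_drop]
    split_ifs with hsmall
    · refine .inr ⟨he, hsmall, ?_, fun q hq hqp => hlt (s + q) (by omega) (by omega)⟩
      rwa [← Nat.add_sub_assoc hsmall]
    · exact .inl ⟨rfl, fun q hq => hlt (s + q) (by omega) (by omega)⟩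

theorem getD_pd (T : List α) {p : ℕ} (hp : p < T.length) : (pd T).getD p 0 = pdAt T p := by
  simp [pd, List.getD_eq_getElem?_getD, hp]

end ParentDistance

/-- `PD_{T[i..j]}[k] = PD_T[i+k-1]` if `PD_T[i+k-1] < k`, else `0`
(all positions 1-indexed). -/
theorem stmt18 {α : Type*} [LinearOrder α] [Inhabited α] (T : List α) (i j : ℕ)
    (h1 : 1 ≤ i) (hij : i ≤ j) (hj : j ≤ T.length)
    (k : ℕ) (hk1 : 1 ≤ k) (hk : k ≤ j - i + 1) :
    (pd (sub T i j)).getD (k - 1) 0 =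
      if (pd T).getD (i + k - 2) 0 < k then (pd T).getD (i + k - 2) 0 else 0 := by
  have hidx : i + k - 2 = (i - 1) + (k - 1) := by omega
  rw [getD_pd _ (by rw [length_sub T h1 hij hj]; omega), getD_pd _ (by omega), sub,
    pdAt_take _ (by omega), pdAt_drop, hidx]
  simp only [Nat.le_sub_one_iff_lt hk1]
end
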